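/- For any fixed n ≥ 1, N ≥ 1, ω with 1 ≤ ω ≤ N, and any integer matrix W, the sum ∑_{U ∈ GL_n(ℤ), U ≡ W (mod N)} exp(−‖U‖²/ω) is bounded by a constant depending only on n (independent of N, ω, W). -/

import Mathlib

/-!
Write each entry of `U` as `u = N q + r` with `0 ≤ r < N`. Then `(|q| - 1) N ≤ u²`, so
`ω ≤ N` gives `exp (-u² / ω) ≤ exp (1 - |q|)`. On a residue class mod `N` the matrix `U` is
determined by its quotients `q_ij`, so the sum is dominated by
`∑_{Q ∈ ℤ^{n×n}} ∏ exp (1 - |Q_ij|) = (∑_{q ∈ ℤ} exp (1 - |q|))^{n²}`.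
-/

theorem summable_prod_comp_and_tsum_le_pow {ι α : Type*} [Fintype ι] {f : α → ℝ} (hf0 : 0 ≤ f)
    (hf : Summable f) :
    Summable (fun b : ι → α => ∏ i, f (b i)) ∧
      ∑' b : ι → α, ∏ i, f (b i) ≤ (∑' a, f a) ^ Fintype.card ι := by
  classical
  have hbox : ∀ s : Finset (ι → α), ∑ b ∈ s, ∏ i, f (b i) ≤ (∑' a, f a) ^ Fintype.card ι := by
    intro s
    let t : ι → Finset α := fun i => s.image (· i)
    have hst : s ⊆ Fintype.piFinset t := fun b hb =>
      Fintype.mem_piFinset.2 fun i => Finset.mem_image_of_mem _ hb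
    calc ∑ b ∈ s, ∏ i, f (b i)
        ≤ ∑ b ∈ Fintype.piFinset t, ∏ i, f (b i) :=
          Finset.sum_le_sum_of_subset_of_nonneg hst fun b _ _ =>
            Finset.prod_nonneg fun i _ => hf0 _
      _ = ∏ i, ∑ a ∈ t i, f a := (Finset.prod_univ_sum t fun _ => f).symm
      _ ≤ ∏ _i : ι, ∑' a, f a :=
          Finset.prod_le_prod (fun i _ => Finset.sum_nonneg fun a _ => hf0 a)
            fun i _ => hf.sum_le_tsum _ fun a _ => hf0 a
      _ = (∑' a, f a) ^ Fintype.card ι := Finset.prod_const _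
  have hprod0 : 0 ≤ fun b : ι → α => ∏ i, f (b i) := fun b => Finset.prod_nonneg fun i _ => hf0 _
  exact ⟨summable_of_sum_le hprod0 hbox, Real.tsum_le_of_sum_le hprod0 hbox⟩

theorem summable_exp_one_sub_abs : Summable fun q : ℤ => Real.exp (1 - |(q : ℝ)|) := by
  simp_rw [sub_eq_add_neg, Real.exp_add]
  refine Summable.mul_left _ (Summable.of_nat_of_neg ?_ ?_) <;> simpa using Real.summable_exp_neg_nat

theorem Int.abs_ediv_sub_one_mul_le_sq (u N : ℤ) (hN : 0 < N) : (|u / N| - 1) * N ≤ u ^ 2 := by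
  have hr0 : 0 ≤ u % N := Int.emod_nonneg u hN.ne'
  have hrN : u % N < N := Int.emod_lt_of_pos u hN
  have hmul : N * |u / N| ≤ |u| + u % N := by
    calc N * |u / N| = |u - u % N| := by
          rw [← eq_sub_of_add_eq (Int.mul_ediv_add_emod u N), abs_mul, abs_of_pos hN]
      _ ≤ |u| + |u % N| := abs_sub _ _
      _ = |u| + u % N := by rw [abs_of_nonneg hr0]
  have hsq : |u| ≤ u ^ 2 := by simpa using Int.natAbs_le_self_sq u
  linarith

theorem Int.eq_of_ediv_eq_of_modEq {a b N : ℤ} (hmod : a ≡ b [ZMOD N]) (hdiv : a / N = b / N) :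
    a = b := by
  rw [← Int.mul_ediv_add_emod a N, ← Int.mul_ediv_add_emod b N, hdiv, hmod.eq]

theorem Real.exp_neg_sq_div_le (u : ℤ) {N : ℕ} {ω : ℝ} (hω : 1 ≤ ω) (hωN : ω ≤ N) :
    Real.exp (-(u : ℝ) ^ 2 / ω) ≤ Real.exp (1 - |((u / N : ℤ) : ℝ)|) := by
  have hN : (0 : ℤ) < N := by exact_mod_cast hω.trans hωN
  have hkey : (|((u / N : ℤ) : ℝ)| - 1) * N ≤ (u : ℝ) ^ 2 := by
    exact_mod_cast Int.abs_ediv_sub_one_mul_le_sq u N hN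
  have hq : (|((u / N : ℤ) : ℝ)| - 1) * ω ≤ (u : ℝ) ^ 2 := by
    rcases eq_or_ne (u / N) 0 with h | h
    · simp only [h, Int.cast_zero, abs_zero]; nlinarith [sq_nonneg (u : ℝ)]
    · have h1 : (1 : ℝ) ≤ |((u / N : ℤ) : ℝ)| := by exact_mod_cast Int.one_le_abs h
      nlinarith
  rw [Real.exp_le_exp, neg_div, neg_le_sub_iff_le_add, ← sub_le_iff_le_add', le_div_iff₀ (by linarith)]
  linarith

theorem Real.exp_neg_sum_sq_div_le {ι κ : Type*} [Fintype ι] [Fintype κ] (U : ι → κ → ℤ) {N : ℕ}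
    {ω : ℝ} (hω : 1 ≤ ω) (hωN : ω ≤ N) :
    Real.exp (-(∑ i, ∑ j, (U i j : ℝ) ^ 2) / ω) ≤
      ∏ i, ∏ j, Real.exp (1 - |((U i j / N : ℤ) : ℝ)|) := by
  have hsplit : -(∑ i, ∑ j, (U i j : ℝ) ^ 2) / ω = ∑ i, ∑ j, -(U i j : ℝ) ^ 2 / ω := by
    simp only [neg_div, Finset.sum_div, Finset.sum_neg_distrib]
  rw [hsplit, Real.exp_sum]
  refine Finset.prod_le_prod (fun i _ => (Real.exp_pos _).le) fun i _ => ?_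
  rw [Real.exp_sum]
  exact Finset.prod_le_prod (fun j _ => (Real.exp_pos _).le) fun j _ =>
    Real.exp_neg_sq_div_le (U i j) hω hωN

theorem stmt13_general (n : ℕ) :
    ∃ C : ℝ, 0 < C ∧
      ∀ (N : ℕ), 1 ≤ N → ∀ ω : ℝ, 1 ≤ ω → ω ≤ (N : ℝ) →
      ∀ W : Matrix (Fin n) (Fin n) ℤ,
        Summable (fun U : {U : Matrix (Fin n) (Fin n) ℤ //
            IsUnit U.det ∧ ∀ i j, ∃ b : ℤ, U i j = W i j + b * N} =>
          Real.exp (-(∑ i, ∑ j, ((U.1 i j : ℝ)) ^ 2) / ω)) ∧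
        ∑' U : {U : Matrix (Fin n) (Fin n) ℤ //
            IsUnit U.det ∧ ∀ i j, ∃ b : ℤ, U i j = W i j + b * N},
          Real.exp (-(∑ i, ∑ j, ((U.1 i j : ℝ)) ^ 2) / ω) ≤ C := by
  set K := ∑' q : ℤ, Real.exp (1 - |(q : ℝ)|)
  have hK : 0 < K := (Real.exp_pos _).trans_le <|
    summable_exp_one_sub_abs.le_tsum 0 fun q _ => (Real.exp_pos _).le
  obtain ⟨hrow, hrow_le⟩ := summable_prod_comp_and_tsum_le_pow (ι := Fin n)
    (fun q => (Real.exp_pos _).le) summable_exp_one_sub_abs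
  obtain ⟨hmat, hmat_le⟩ := summable_prod_comp_and_tsum_le_pow (ι := Fin n)
    (fun r => Finset.prod_nonneg fun j _ => (Real.exp_pos _).le) hrow
  refine ⟨(K ^ n) ^ n, by positivity, fun N _ ω hω hωN W => ?_⟩
  set S := {U : Matrix (Fin n) (Fin n) ℤ // IsUnit U.det ∧ ∀ i j, ∃ b : ℤ, U i j = W i j + b * N}
  let quot : S → Fin n → Fin n → ℤ := fun U i j => U.1 i j / N
  have hquot : Function.Injective quot := by
    intro U V hUV
    ext i j
    obtain ⟨b, hb⟩ := U.2.2 i j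
    obtain ⟨c, hc⟩ := V.2.2 i j
    refine Int.eq_of_ediv_eq_of_modEq ?_ (congrFun₂ hUV i j)
    rw [hb, hc]
    exact Int.modEq_iff_dvd.2 ⟨c - b, by ring⟩
  have hle (U : S) := Real.exp_neg_sum_sq_div_le U.1 hω hωN
  have hsum := Summable.of_nonneg_of_le (fun U => (Real.exp_pos _).le) hle (hmat.comp_injective hquot)
  refine ⟨hsum, ?_⟩
  calc _ ≤ ∑' B : Fin n → Fin n → ℤ, ∏ i, ∏ j, Real.exp (1 - |(B i j : ℝ)|) :=
        hsum.tsum_le_tsum_of_inj quot hquot (fun B _ => by positivity) hle hmat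
    _ ≤ _ := hmat_le
    _ ≤ (K ^ n) ^ n := by simpa using pow_le_pow_left₀ (tsum_nonneg fun r => by positivity) hrow_le n

/-- For fixed `n ≥ 1`, uniformly in `N ≥ 1`, `1 ≤ ω ≤ N` and the integer matrix
`W`, the sum `∑_{U ∈ GL_n(ℤ), U ≡ W (mod N)} exp(-‖U‖²/ω)` is bounded by a
constant depending only on `n`. -/
theorem stmt13 (n : ℕ) (hn : 1 ≤ n) :
    ∃ C : ℝ, 0 < C ∧
      ∀ (N : ℕ), 1 ≤ N → ∀ ω : ℝ, 1 ≤ ω → ω ≤ (N : ℝ) →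
      ∀ W : Matrix (Fin n) (Fin n) ℤ,
        Summable (fun U : {U : Matrix (Fin n) (Fin n) ℤ //
            IsUnit U.det ∧ ∀ i j, ∃ b : ℤ, U i j = W i j + b * N} =>
          Real.exp (-(∑ i, ∑ j, ((U.1 i j : ℝ)) ^ 2) / ω)) ∧
        ∑' U : {U : Matrix (Fin n) (Fin n) ℤ //
            IsUnit U.det ∧ ∀ i j, ∃ b : ℤ, U i j = W i j + b * N},
          Real.exp (-(∑ i, ∑ j, ((U.1 i j : ℝ)) ^ 2) / ω) ≤ C :=
  stmt13_general n
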